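/- Let m ≥ 2 and consider the two-stage instance with n = m, c = 0, A = 0, d = e (the all-ones vector of ℝ^m), uncertainty set U = conv({0, e₁, …, e_m, ν₁, …, ν_m}) where ν_i = (1/√m)(e − e_i), and matrix B ∈ ℝ^{m×m} with B_ii = 1 and B_ij = 1/√m for i ≠ j. Then the optimal affine-policy value satisfies z_Aff(B) ≥ (m−1)/(6√m). -/

import Mathlib

open Matrix MeasureTheory ProbabilityTheory

/-- Optimal value of the two-stage adjustable robust problem. -/
noncomputable def zAR {m n : ℕ} (U : Set (Fin m → ℝ)) (c d : Fin n → ℝ)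
    (A B : Matrix (Fin m) (Fin n) ℝ) : EReal :=
  ⨅ x : {x : Fin n → ℝ // 0 ≤ x},
    ((c ⬝ᵥ (x : Fin n → ℝ) : ℝ) : EReal) +
      ⨆ h : U,
        ⨅ _y : {y : Fin n → ℝ // 0 ≤ y ∧
            (h : Fin m → ℝ) ≤ A *ᵥ (x : Fin n → ℝ) + B *ᵥ y},
          ((d ⬝ᵥ (_y : Fin n → ℝ) : ℝ) : EReal)

/-- Optimal value of the affine-policy problem. -/
noncomputable def zAff {m n : ℕ} (U : Set (Fin m → ℝ)) (c d : Fin n → ℝ)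
    (A B : Matrix (Fin m) (Fin n) ℝ) : EReal :=
  ⨅ p : {p : (Fin n → ℝ) × Matrix (Fin n) (Fin m) ℝ × (Fin n → ℝ) //
      0 ≤ p.1 ∧ ∀ h ∈ U, 0 ≤ p.2.1 *ᵥ h + p.2.2 ∧
        h ≤ A *ᵥ p.1 + B *ᵥ (p.2.1 *ᵥ h + p.2.2)},
    ((c ⬝ᵥ p.1.1 : ℝ) : EReal) +
      ⨆ h : U, ((d ⬝ᵥ (p.1.2.1 *ᵥ (h : Fin m → ℝ) + p.1.2.2) : ℝ) : EReal)

/-- The polyhedral uncertainty set. -/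
def polyU {m L : ℕ} (R : Matrix (Fin L) (Fin m) ℝ) (r : Fin L → ℝ) : Set (Fin m → ℝ) :=
  {h | 0 ≤ h ∧ R *ᵥ h ≤ r}

/-- The dualized uncertainty set. -/
def dualW {m n : ℕ} (B : Matrix (Fin m) (Fin n) ℝ) (d : Fin n → ℝ) : Set (Fin m → ℝ) :=
  {w | 0 ≤ w ∧ Bᵀ *ᵥ w ≤ d}

/-- Optimal value of the dualized adjustable robust problem. -/
noncomputable def zdAR {m n L : ℕ} (c d : Fin n → ℝ) (A B : Matrix (Fin m) (Fin n) ℝ)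
    (R : Matrix (Fin L) (Fin m) ℝ) (r : Fin L → ℝ) : EReal :=
  ⨅ x : {x : Fin n → ℝ // 0 ≤ x},
    ((c ⬝ᵥ (x : Fin n → ℝ) : ℝ) : EReal) +
      ⨆ w : dualW B d,
        ⨅ l : {l : Fin L → ℝ // 0 ≤ l ∧ (w : Fin m → ℝ) ≤ Rᵀ *ᵥ l},
          ((-(A *ᵥ (x : Fin n → ℝ)) ⬝ᵥ (w : Fin m → ℝ) + r ⬝ᵥ (l : Fin L → ℝ) : ℝ) : EReal)

/-- Optimal value of the dualized affine-policy problem. -/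
noncomputable def zdAff {m n L : ℕ} (c d : Fin n → ℝ) (A B : Matrix (Fin m) (Fin n) ℝ)
    (R : Matrix (Fin L) (Fin m) ℝ) (r : Fin L → ℝ) : EReal :=
  ⨅ p : {p : (Fin n → ℝ) × Matrix (Fin L) (Fin m) ℝ × (Fin L → ℝ) //
      0 ≤ p.1 ∧ ∀ w ∈ dualW B d, 0 ≤ p.2.1 *ᵥ w + p.2.2 ∧
        w ≤ Rᵀ *ᵥ (p.2.1 *ᵥ w + p.2.2)},
    ((c ⬝ᵥ p.1.1 : ℝ) : EReal) +
      ⨆ w : dualW B d,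
        ((-(A *ᵥ p.1.1) ⬝ᵥ (w : Fin m → ℝ) + r ⬝ᵥ (p.1.2.1 *ᵥ (w : Fin m → ℝ) + p.1.2.2) : ℝ) : EReal)
/-- The uncertainty set of the worst-case instance:
`U = conv{0, e₁, …, e_m, ν₁, …, ν_m}` with `νᵢ = (1/√m)(e - eᵢ)`. -/
noncomputable def badU (m : ℕ) : Set (Fin m → ℝ) :=
  convexHull ℝ (insert 0
    (Set.range (fun i : Fin m => (Pi.single i 1 : Fin m → ℝ)) ∪
      Set.range (fun i : Fin m => (Real.sqrt m)⁻¹ • ((1 : Fin m → ℝ) - Pi.single i 1))))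

/-- The worst-case recourse matrix: `B_ii = 1`, `B_ij = 1/√m` for `i ≠ j`. -/
noncomputable def badB (m : ℕ) : Matrix (Fin m) (Fin m) ℝ :=
  Matrix.of fun i j => if i = j then (1 : ℝ) else 1 / Real.sqrt m

/-!
Write `a = 1/√m` and test a feasible affine policy `y(h) = P h + q` of worst-case cost `Z` only at
the points `0`, `eᵢ` and `νᵢ` of `U`. Covering `eᵢ` in row `i` forces a large trace:
`(1 - a)(tr P + ∑ q) ≥ m (1 - a Z)`. Nonnegativity of `y(νᵢ)ᵢ` bounds the trace by the total sum
`σ` of the entries of `P`, and the cost at the `νᵢ`, summed over `i`, bounds `a (m - 1) σ` by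
`m Z`. Together, using `a² m = 1`, these give `a (m - 1) ≤ 3 Z`.
-/

lemma EReal.coe_le_iSup_coe_of_forall_le {ι : Type*} (f : ι → ℝ) (b : ℝ)
    (h : ∀ Z : ℝ, (∀ i, f i ≤ Z) → b ≤ Z) : (b : EReal) ≤ ⨆ i, (f i : EReal) := by
  by_contra! hlt
  obtain ⟨Z, hsup, hZb⟩ := EReal.exists_between_coe_real hlt
  have hbZ := h Z fun i =>
    EReal.coe_le_coe_iff.1 ((le_iSup (fun i => (f i : EReal)) i).trans hsup.le)
  exact (EReal.coe_lt_coe_iff.1 hZb).not_ge hbZ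

lemma le_three_mul_of_summed_constraints {m a Q D σ Z : ℝ} (ha : 0 < a) (ha1 : a ≤ 1)
    (ham : a ^ 2 * m = 1) (hm : 1 ≤ m) (hQ : 0 ≤ Q) (hQZ : Q ≤ Z)
    (hcover : m * (1 - a * Z) ≤ (1 - a) * (Q + D)) (hnonneg : a * D - Q ≤ a * σ)
    (hnu : m * Q + a * (m - 1) * σ ≤ m * Z) :
    a * (m - 1) ≤ 3 * Z := by
  have hZ : 0 ≤ Z := hQ.trans hQZ
  have h1a : 0 ≤ 1 - a := by linarith
  have hm1 : 0 ≤ m - 1 := by linarith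
  have hD : a * (m - 1) * D ≤ m * Z := by
    linarith [mul_le_mul_of_nonneg_left hnonneg hm1]
  have e1 := mul_le_mul_of_nonneg_left hcover (mul_nonneg ha.le hm1)
  have e2 := mul_le_mul_of_nonneg_left hD h1a
  have e3 := mul_le_mul_of_nonneg_left hQZ (mul_nonneg (mul_nonneg h1a ha.le) hm1)
  have e4 : a ^ 2 * m * ((m - 1) * Z) = (m - 1) * Z := by rw [ham, one_mul]
  have hkey : a * (m - 1) * m ≤ ((m - 1) + (1 - a) * a * (m - 1) + (1 - a) * m) * Z := by
    linarith
  have hcoef : (m - 1) + (1 - a) * a * (m - 1) + (1 - a) * m ≤ 3 * m := by nlinarith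
  have hmul : m * (a * (m - 1)) ≤ m * (3 * Z) := by
    linarith [mul_le_mul_of_nonneg_right hcoef hZ]
  exact le_of_mul_le_mul_left hmul (by linarith)

lemma badB_mulVec (m : ℕ) (y : Fin m → ℝ) (i : Fin m) :
    (badB m *ᵥ y) i = (1 - (Real.sqrt m)⁻¹) * y i + (Real.sqrt m)⁻¹ * ∑ j, y j := by
  have hrow : ∀ j,
      badB m i j = (Real.sqrt m)⁻¹ + (1 - (Real.sqrt m)⁻¹) * (Pi.single i 1 : Fin m → ℝ) j := by
    intro j
    by_cases h : i = j
    · subst h; simp [badB]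
    · simp [badB, h, Ne.symm h]
  simp only [mulVec, dotProduct, hrow, add_mul, Finset.sum_add_distrib, ← Finset.mul_sum]
  simp only [Pi.single_apply, mul_ite, mul_one, mul_zero, ite_mul, zero_mul, Finset.sum_ite_eq',
    Finset.mem_univ, ↓reduceIte]
  ring

lemma mulVec_smul_one_sub_single {l n : Type*} [Fintype n] [DecidableEq n] (P : Matrix l n ℝ)
    (c : ℝ) (i : n) (j : l) :
    (P *ᵥ (c • ((1 : n → ℝ) - Pi.single i 1))) j = c * (∑ k, P j k - P j i) := by
  rw [mulVec_smul, mulVec_sub, mulVec_single_one]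
  simp [mulVec, dotProduct]

lemma zero_mem_badU (m : ℕ) : (0 : Fin m → ℝ) ∈ badU m :=
  subset_convexHull ℝ _ (Set.mem_insert _ _)

lemma single_mem_badU (m : ℕ) (i : Fin m) : (Pi.single i 1 : Fin m → ℝ) ∈ badU m :=
  subset_convexHull ℝ _ (Or.inr (Or.inl ⟨i, rfl⟩))

lemma smul_one_sub_single_mem_badU (m : ℕ) (i : Fin m) :
    (Real.sqrt m)⁻¹ • ((1 : Fin m → ℝ) - Pi.single i 1) ∈ badU m :=
  subset_convexHull ℝ _ (Or.inr (Or.inr ⟨i, rfl⟩))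

lemma affine_policy_cost_lower_bound {m : ℕ} (hm : 1 ≤ m) (P : Matrix (Fin m) (Fin m) ℝ)
    (q : Fin m → ℝ) (Z : ℝ) (hfeas : ∀ h ∈ badU m, 0 ≤ P *ᵥ h + q ∧ h ≤ badB m *ᵥ (P *ᵥ h + q))
    (hZ : ∀ h ∈ badU m, ∑ j, (P *ᵥ h + q) j ≤ Z) :
    (Real.sqrt m)⁻¹ * (m - 1) ≤ 3 * Z := by
  set a := (Real.sqrt m)⁻¹ with ha_def
  have hm' : (1 : ℝ) ≤ m := by exact_mod_cast hm
  have ha : 0 < a := by positivity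
  have ha1 : a ≤ 1 := inv_le_one_of_one_le₀ (Real.one_le_sqrt.2 hm')
  have ham : a ^ 2 * m = 1 := by
    rw [ha_def, inv_pow, Real.sq_sqrt (by positivity)]
    exact inv_mul_cancel₀ (by positivity)
  have hq : 0 ≤ q := by simpa using (hfeas 0 (zero_mem_badU m)).1
  have hQZ : ∑ j, q j ≤ Z := by simpa using hZ 0 (zero_mem_badU m)
  have hcover : ∀ i, 1 - a * Z ≤ (1 - a) * (P i i + q i) := by
    intro i
    have hcov := (hfeas _ (single_mem_badU m i)).2 i
    have hval := hZ _ (single_mem_badU m i)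
    rw [badB_mulVec] at hcov
    simp only [Pi.single_eq_same, mulVec_single, MulOpposite.op_one, one_smul, Pi.add_apply,
      col_apply] at hcov hval
    linarith [mul_le_mul_of_nonneg_left hval ha.le]
  have hnonneg : ∀ i, 0 ≤ a * (∑ k, P i k - P i i) + q i := by
    intro i
    simpa [mulVec_smul_one_sub_single] using (hfeas _ (smul_one_sub_single_mem_badU m i)).1 i
  have hnu : ∀ i, ∑ j, (a * (∑ k, P j k - P j i) + q j) ≤ Z := by
    intro i
    simpa [mulVec_smul_one_sub_single] using hZ _ (smul_one_sub_single_mem_badU m i)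
  apply le_three_mul_of_summed_constraints (D := ∑ i, P i i) (σ := ∑ i, ∑ k, P i k) ha ha1 ham hm'
    (Finset.sum_nonneg fun j _ => hq j) hQZ
  · have hsum := Finset.sum_le_sum fun i (_ : i ∈ Finset.univ) => hcover i
    simp only [Finset.sum_const, Finset.card_univ, Fintype.card_fin, nsmul_eq_mul,
      ← Finset.mul_sum, Finset.sum_add_distrib] at hsum
    linarith
  · have hsum := Finset.sum_nonneg fun i (_ : i ∈ Finset.univ) => hnonneg i
    rw [Finset.sum_add_distrib, ← Finset.mul_sum, Finset.sum_sub_distrib] at hsum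
    linarith
  · have hsum := Finset.sum_le_sum fun i (_ : i ∈ Finset.univ) => hnu i
    simp only [Finset.sum_add_distrib, ← Finset.mul_sum, Finset.sum_sub_distrib,
      Finset.sum_const, Finset.card_univ, Fintype.card_fin, nsmul_eq_mul] at hsum
    rw [Finset.sum_comm (f := fun i k => P k i)] at hsum
    linarith

/-- For the deterministic worst-case instance, the optimal affine-policy
value is at least `(m-1)/(6√m)`. -/
theorem affine_bad_instance_lower_bound (m : ℕ) (hm : 2 ≤ m) :
    ((((m : ℝ) - 1) / (6 * Real.sqrt m) : ℝ) : EReal) ≤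
      zAff (badU m) (0 : Fin m → ℝ) (fun _ => (1 : ℝ)) 0 (badB m) := by
  refine le_iInf fun ⟨⟨_, P, q⟩, _, hfeas⟩ => ?_
  simp only [zero_dotProduct, EReal.coe_zero, zero_add]
  refine EReal.coe_le_iSup_coe_of_forall_le _ _ fun Z hZ => ?_
  have hbound := affine_policy_cost_lower_bound (by omega) P q Z
    (fun h hh => by simpa using hfeas h hh)
    (fun h hh => by simpa [dotProduct] using hZ ⟨h, hh⟩)
  have hnonneg : 0 ≤ (Real.sqrt m)⁻¹ * (m - 1) := by
    have : (2 : ℝ) ≤ m := by exact_mod_cast hm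
    exact mul_nonneg (by positivity) (by linarith)
  have heq : ((m : ℝ) - 1) / (6 * Real.sqrt m) = (Real.sqrt m)⁻¹ * (m - 1) / 6 := by ring
  linarith
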